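/- arXiv:1502.03706 — 2 statements merged into one kernel-verified Lean document; each statement's English description precedes it below -/
import Mathlib

section
/- Let g be the 6-dimensional real Lie algebra with basis e1, e2, e3, f1, f2, f3 and Lie brackets [e1,e2]=2e3, [e1,e3]=−2e2, [e2,e3]=2e1, [f1,f2]=2f3, [f1,f3]=−2f2, [f2,f3]=2f1, and [ei,fj]=0 for all i,j, and let g_ℂ = ℂ⊗g be its complexification. Set Zb1 := (e1+i e2)/2, Zb2 := (f1+i f2)/2, Z3 := (e3−i f3)/2, Zb3 := (e3+i f3)/2 in g_ℂ. Then for every t ∈ ℂ, the ℂ-linear span W_t of { Zb1, Zb2, Zb3 + t·Z3 } is a Lie subalgebra of g_ℂ. -/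
open Matrix

noncomputable section

/-- The complexification `g_ℂ = ℂ ⊗ g` of `g = su(2) ⊕ su(2)`, as `ℂ³ × ℂ³`. -/
abbrev gC : Type := (Fin 3 → ℂ) × (Fin 3 → ℂ)

/-- The basis `e1, e2, e3` of (the complexification of) the first copy of `su(2)`. -/
def e (i : Fin 3) : gC := (Pi.single i 1, 0)

/-- The basis `f1, f2, f3` of (the complexification of) the second copy of `su(2)`. -/
def f (i : Fin 3) : gC := (0, Pi.single i 1)

/-- The (complexified) Lie bracket of `g`: twice the cross product on each factor.
In the bases `e`, `f` this realizes exactly `[e1,e2] = 2e3`, `[e1,e3] = -2e2`,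
`[e2,e3] = 2e1`, `[f1,f2] = 2f3`, `[f1,f3] = -2f2`, `[f2,f3] = 2f1`, `[ei,fj] = 0`. -/
def brk (x y : gC) : gC := ((2 : ℂ) • (x.1 ⨯₃ y.1), (2 : ℂ) • (x.2 ⨯₃ y.2))

/-- `Zb1 = (e1 + i e2)/2`. -/
def Zb1 : gC := (2⁻¹ : ℂ) • (e 0 + Complex.I • e 1)

/-- `Zb2 = (f1 + i f2)/2`. -/
def Zb2 : gC := (2⁻¹ : ℂ) • (f 0 + Complex.I • f 1)

/-- `Z3 = (e3 - i f3)/2`. -/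
def Z3 : gC := (2⁻¹ : ℂ) • (e 2 - Complex.I • f 2)

/-- `Zb3 = (e3 + i f3)/2`. -/
def Zb3 : gC := (2⁻¹ : ℂ) • (e 2 + Complex.I • f 2)

/-- The span `W_t` of `{Zb1, Zb2, Zb3 + t Z3}`, i.e. the `(0,1)`-tangent space of the
deformed almost complex structure `J_t` on `S³×S³`. -/
def W (t : ℂ) : Submodule ℂ gC := Submodule.span ℂ {Zb1, Zb2, Zb3 + t • Z3}

/-!
The bracket is bilinear and alternating, so closure of `W t` reduces to the brackets of its
three generators: `Zb1` and `Zb2` commute, lying in different `su(2)` factors, and both are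
eigenvectors of `ad (Zb3 + t • Z3)`.
-/

theorem LinearMap.apply_apply_mem_of_mem_span {R M N P : Type*} [CommSemiring R]
    [AddCommMonoid M] [AddCommMonoid N] [AddCommMonoid P] [Module R M] [Module R N] [Module R P]
    (B : M →ₗ[R] N →ₗ[R] P) {s : Set M} {t : Set N} {p : Submodule R P}
    (h : ∀ x ∈ s, ∀ y ∈ t, B x y ∈ p) :
    ∀ x ∈ Submodule.span R s, ∀ y ∈ Submodule.span R t, B x y ∈ p := by
  refine Submodule.map₂_le.mp ?_
  rw [Submodule.map₂_span_span, Submodule.span_le]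
  rintro _ ⟨x, hx, y, hy, rfl⟩
  exact h x hx y hy

def brkₗ : gC →ₗ[ℂ] gC →ₗ[ℂ] gC :=
  LinearMap.mk₂ ℂ brk
    (fun x y z => by simp [brk, smul_add])
    (fun c x y => by simp [brk, smul_comm c])
    (fun x y z => by simp [brk, smul_add])
    (fun c x y => by simp [brk, smul_comm c])

theorem brk_anticomm (x y : gC) : brk y x = -brk x y := by
  rw [brk, brk, ← cross_anticomm x.1, ← cross_anticomm x.2, smul_neg, smul_neg, Prod.neg_mk]

theorem brk_self (x : gC) : brk x x = 0 := by
  simp [brk, cross_self]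

theorem brk_Zb1_Zb2 : brk Zb1 Zb2 = 0 := by
  simp [brk, Zb1, Zb2, e, f]

theorem brk_Zb1_Zb3_add_smul_Z3 (t : ℂ) :
    brk Zb1 (Zb3 + t • Z3) = (Complex.I * (1 + t)) • Zb1 := by
  ext i <;> fin_cases i <;> simp [brk, Zb1, Zb3, Z3, e, f, cross_apply] <;> grind [Complex.I_sq]

theorem brk_Zb2_Zb3_add_smul_Z3 (t : ℂ) :
    brk Zb2 (Zb3 + t • Z3) = (t - 1) • Zb2 := by
  ext i <;> fin_cases i <;> simp [brk, Zb2, Zb3, Z3, e, f, cross_apply] <;> grind [Complex.I_sq]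

theorem brk_mem_W_of_mem_generators (t : ℂ) :
    ∀ x ∈ ({Zb1, Zb2, Zb3 + t • Z3} : Set gC), ∀ y ∈ ({Zb1, Zb2, Zb3 + t • Z3} : Set gC),
      brk x y ∈ W t := by
  have hZb1 : Zb1 ∈ W t := Submodule.subset_span (by simp)
  have hZb2 : Zb2 ∈ W t := Submodule.subset_span (by simp)
  have h12 : brk Zb1 Zb2 ∈ W t := brk_Zb1_Zb2 ▸ zero_mem _
  have h13 : brk Zb1 (Zb3 + t • Z3) ∈ W t :=
    brk_Zb1_Zb3_add_smul_Z3 t ▸ Submodule.smul_mem _ _ hZb1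
  have h23 : brk Zb2 (Zb3 + t • Z3) ∈ W t :=
    brk_Zb2_Zb3_add_smul_Z3 t ▸ Submodule.smul_mem _ _ hZb2
  rintro x (rfl | rfl | rfl) y (rfl | rfl | rfl)
  all_goals first
    | rw [brk_self]; exact zero_mem _
    | assumption
    | rw [brk_anticomm]; exact neg_mem ‹_›

/-- for every `t ∈ ℂ`, the space `W_t` is a Lie subalgebra of `g_ℂ`,
i.e. it is closed under the bracket (integrability of `J_t`). -/
theorem stmt1 (t : ℂ) : ∀ x ∈ W t, ∀ y ∈ W t, brk x y ∈ W t :=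
  brkₗ.apply_apply_mem_of_mem_span (brk_mem_W_of_mem_generators t)

end
end

section
/- For every t ∈ ℂ with |t| < 1, one has ∂_t∂̄_t(φ3∧φ̄3) = A_t · φ1∧φ2∧φ̄1∧φ̄2, where A_t := (t−i)(conj(t)+1) + (t+1)(conj(t)+i) = 2(|t|² + Re(t) − Im(t)). Consequently, if |t|² + Re(t) − Im(t) ≠ 0, then φ1∧φ̄1∧φ2∧φ̄2 = ∂_t∂̄_t( −(1/A_t)·φ3∧φ̄3 ), so the cup product [φ1∧φ̄1]·[φ2∧φ̄2] vanishes in H_BC^{2,2}(t). -/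
open Complex

noncomputable section

/-- The 64-dimensional exterior algebra on six generators, modelled as
functions from subsets of `Fin 6` to `ℂ`. The generators `φ 0, φ 1, φ 2`
represent `φ1, φ2, φ3` (bidegree `(1,0)`) and `φ 3, φ 4, φ 5` represent
`φ̄1, φ̄2, φ̄3` (bidegree `(0,1)`). -/
abbrev Lam : Type := Finset (Fin 6) → ℂ

/-- Basis monomial indexed by a subset of the generators. -/
def mon (S : Finset (Fin 6)) : Lam := Pi.single S 1

/-- The generators. -/
def φ (j : Fin 6) : Lam := mon {j}

/-- The Koszul sign. -/
def wsign (T U : Finset (Fin 6)) : ℂ :=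
  (-1 : ℂ) ^ (((T ×ˢ U).filter fun p => p.2 < p.1).card)

/-- The wedge product. -/
def wedge (x y : Lam) : Lam :=
  fun S => ∑ T ∈ S.powerset, wsign T (S \ T) * x T * y (S \ T)

infixr:70 " ⋏ " => wedge

/-- The bidegree-`(p,q)` component `Λ^{p,q}`. -/
def Lpq (p q : ℕ) : Submodule ℂ Lam where
  carrier := {x | ∀ S : Finset (Fin 6),
    ¬((S.filter fun i : Fin 6 => (i : ℕ) < 3).card = p ∧ (S.filter fun i : Fin 6 => 3 ≤ (i : ℕ)).card = q) →
      x S = 0}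
  add_mem' := by intro a b ha hb S hS; simp [ha S hS, hb S hS]
  zero_mem' := by intro S _; rfl
  smul_mem' := by intro c x hx S hS; simp [hx S hS]

/-- The total-degree-`k` component. -/
def Ldeg (k : ℕ) : Submodule ℂ Lam where
  carrier := {x | ∀ S : Finset (Fin 6), S.card ≠ k → x S = 0}
  add_mem' := by intro a b ha hb S hS; simp [ha S hS, hb S hS]
  zero_mem' := by intro S _; rfl
  smul_mem' := by intro c x hx S hS; simp [hx S hS]

/-- `D` is a graded derivation of bidegree `(a,b)`: it maps `Λ^{p,q}` to `Λ^{p+a,q+b}` and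
satisfies the graded Leibniz rule with the sign of the total degree. -/
def IsDer (D : Lam →ₗ[ℂ] Lam) (a b : ℕ) : Prop :=
  (∀ p q : ℕ, ∀ x ∈ Lpq p q, D x ∈ Lpq (p + a) (q + b)) ∧
  (∀ k : ℕ, ∀ x ∈ Ldeg k, ∀ y : Lam,
    D (x ⋏ y) = (D x) ⋏ y + ((-1 : ℂ)) ^ k • (x ⋏ D y))

/-- `D` is the operator `∂_t` : the graded derivation of bidegree `(1,0)` determined on the
generators by the structure equations of the deformed Calabi–Eckmann structure `J_t`
(the values on the conjugate generators `φ 3, φ 4, φ 5` being obtained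
by applying the conjugation `σ` to the values of `∂̄_t`). -/
def IsDelT (t : ℂ) (D : Lam →ₗ[ℂ] Lam) : Prop :=
  IsDer D 1 0 ∧
  D (φ 0) = (Complex.I * ((starRingEnd ℂ) t + 1) / (1 - Complex.normSq t)) • (φ 0 ⋏ φ 2) ∧
  D (φ 1) = ((1 - (starRingEnd ℂ) t) / (1 - Complex.normSq t)) • (φ 1 ⋏ φ 2) ∧
  D (φ 2) = 0 ∧
  D (φ 3) = (-(Complex.I * ((starRingEnd ℂ) t + 1)) / (1 - Complex.normSq t)) • (φ 3 ⋏ φ 2) ∧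
  D (φ 4) = (((starRingEnd ℂ) t - 1) / (1 - Complex.normSq t)) • (φ 4 ⋏ φ 2) ∧
  D (φ 5) = ((starRingEnd ℂ) t + Complex.I) • (φ 3 ⋏ φ 0) + ((starRingEnd ℂ) t + 1) • (φ 4 ⋏ φ 1)

/-- `Db` is the operator `∂̄_t`. -/
def IsDelBarT (t : ℂ) (Db : Lam →ₗ[ℂ] Lam) : Prop :=
  IsDer Db 0 1 ∧
  Db (φ 0) = (Complex.I * (t + 1) / (1 - Complex.normSq t)) • (φ 0 ⋏ φ 5) ∧
  Db (φ 1) = ((t - 1) / (1 - Complex.normSq t)) • (φ 1 ⋏ φ 5) ∧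
  Db (φ 2) = (t - Complex.I) • (φ 0 ⋏ φ 3) + (t + 1) • (φ 1 ⋏ φ 4) ∧
  Db (φ 3) = (-(Complex.I * (t + 1)) / (1 - Complex.normSq t)) • (φ 3 ⋏ φ 5) ∧
  Db (φ 4) = ((1 - t) / (1 - Complex.normSq t)) • (φ 4 ⋏ φ 5) ∧
  Db (φ 5) = 0

/-- The Bott–Chern cocycles in bidegree `(p,q)` : `Ker ∂ ∩ Ker ∂̄ ∩ Λ^{p,q}`. -/
def Kbc (D Db : Lam →ₗ[ℂ] Lam) (p q : ℕ) : Submodule ℂ Lam :=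
  LinearMap.ker D ⊓ LinearMap.ker Db ⊓ Lpq p q

/-- The Bott–Chern coboundaries in bidegree `(p,q)` : `∂∂̄(Λ^{p-1,q-1})`
(zero when `p = 0` or `q = 0`). -/
def Ibc (D Db : Lam →ₗ[ℂ] Lam) (p q : ℕ) : Submodule ℂ Lam :=
  if p = 0 ∨ q = 0 then ⊥ else Submodule.map (D ∘ₗ Db) (Lpq (p - 1) (q - 1))

/-- The Aeppli cocycles in bidegree `(p,q)` : `Ker (∂∂̄) ∩ Λ^{p,q}`. -/
def Ka (D Db : Lam →ₗ[ℂ] Lam) (p q : ℕ) : Submodule ℂ Lam :=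
  LinearMap.ker (D ∘ₗ Db) ⊓ Lpq p q

/-- The Aeppli coboundaries in bidegree `(p,q)` : `∂(Λ^{p-1,q}) + ∂̄(Λ^{p,q-1})`. -/
def Ia (D Db : Lam →ₗ[ℂ] Lam) (p q : ℕ) : Submodule ℂ Lam :=
  (if p = 0 then ⊥ else Submodule.map D (Lpq (p - 1) q)) ⊔
  (if q = 0 then ⊥ else Submodule.map Db (Lpq p (q - 1)))

end

/-!
The two-form `φ3∧φ̄3` is the natural primitive: `∂̄_t φ3 = (t-i) φ1∧φ̄1 + (t+1) φ2∧φ̄2`, while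
`φ1∧φ̄1` and `φ2∧φ̄2` are `∂_t`-closed because the contributions of `∂_t φj` and `∂_t φ̄j`
cancel. Hence `∂_t∂̄_t(φ3∧φ̄3)` only sees `∂_t φ̄3 = (t̄+i) φ̄1∧φ1 + (t̄+1) φ̄2∧φ2`, and the
cross terms add up to `A_t · φ1∧φ2∧φ̄1∧φ̄2`. When `A_t ≠ 0`, rescaling exhibits
`φ1∧φ̄1∧φ2∧φ̄2` as a `∂_t∂̄_t`-exact form of bidegree `(2,2)`.
-/

section Wedge

lemma smul_wedge (c : ℂ) (x y : Lam) : (c • x) ⋏ y = c • (x ⋏ y) := by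
  funext S
  simp only [wedge, Pi.smul_apply, smul_eq_mul, Finset.mul_sum]
  exact Finset.sum_congr rfl fun T _ => by ring

lemma wedge_smul (c : ℂ) (x y : Lam) : x ⋏ (c • y) = c • (x ⋏ y) := by
  funext S
  simp only [wedge, Pi.smul_apply, smul_eq_mul, Finset.mul_sum]
  exact Finset.sum_congr rfl fun T _ => by ring

lemma add_wedge (x y z : Lam) : (x + y) ⋏ z = x ⋏ z + y ⋏ z := by
  funext S
  simp only [wedge, Pi.add_apply, ← Finset.sum_add_distrib]
  exact Finset.sum_congr rfl fun T _ => by ring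

lemma wedge_add (x y z : Lam) : x ⋏ (y + z) = x ⋏ y + x ⋏ z := by
  funext S
  simp only [wedge, Pi.add_apply, ← Finset.sum_add_distrib]
  exact Finset.sum_congr rfl fun T _ => by ring

lemma zero_wedge (x : Lam) : (0 : Lam) ⋏ x = 0 := by
  simpa using smul_wedge 0 0 x

lemma wedge_zero (x : Lam) : x ⋏ (0 : Lam) = 0 := by
  simpa using wedge_smul 0 x 0

lemma wedge_neg (x y : Lam) : x ⋏ -y = -(x ⋏ y) := by
  simpa using wedge_smul (-1) x y

end Wedge

section Monomials

lemma mon_wedge_mon_of_disjoint {A B : Finset (Fin 6)} (h : Disjoint A B) :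
    mon A ⋏ mon B = wsign A B • mon (A ∪ B) := by
  funext S
  simp only [wedge, mon, Pi.single_apply, Pi.smul_apply, smul_eq_mul]
  by_cases hA : A ⊆ S
  · rw [Finset.sum_eq_single_of_mem A (Finset.mem_powerset.2 hA)]
    · by_cases hB : S \ A = B
      · subst hB
        simp [Finset.union_sdiff_of_subset hA]
      · have hS : S ≠ A ∪ B := by
          rintro rfl; exact hB (Finset.union_sdiff_cancel_left h)
        simp [hB, hS]
    · intro T _ hT; simp [hT]
  · rw [Finset.sum_eq_zero]
    · have hS : S ≠ A ∪ B := fun e => hA (e ▸ Finset.subset_union_left)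
      simp [hS]
    · intro T hTm
      have : T ≠ A := fun e => hA (e ▸ Finset.mem_powerset.1 hTm)
      simp [this]

lemma mon_wedge_mon_of_not_disjoint {A B : Finset (Fin 6)} (h : ¬ Disjoint A B) :
    mon A ⋏ mon B = 0 := by
  funext S
  simp only [wedge, mon, Pi.single_apply]
  refine Finset.sum_eq_zero fun T _ => ?_
  by_cases hT : T = A
  · subst hT
    have hB : S \ T ≠ B := by rintro rfl; exact h Finset.disjoint_sdiff
    simp [hB]
  · simp [hT]

lemma mon_wedge_mon_of_even {A B C : Finset (Fin 6)} (h : Disjoint A B) (hU : A ∪ B = C)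
    (he : Even ((A ×ˢ B).filter fun p => p.2 < p.1).card) :
    mon A ⋏ mon B = mon C := by
  rw [mon_wedge_mon_of_disjoint h, hU, wsign, he.neg_one_pow, one_smul]

lemma mon_wedge_mon_of_odd {A B C : Finset (Fin 6)} (h : Disjoint A B) (hU : A ∪ B = C)
    (ho : Odd ((A ×ˢ B).filter fun p => p.2 < p.1).card) :
    mon A ⋏ mon B = -mon C := by
  rw [mon_wedge_mon_of_disjoint h, hU, wsign, ho.neg_one_pow, neg_one_smul]

lemma φ_wedge_φ_of_lt {i j : Fin 6} (h : i < j) : φ i ⋏ φ j = mon {i, j} := by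
  refine mon_wedge_mon_of_even (by simpa using h.ne) rfl ?_
  simp [Finset.filter_singleton, h.not_gt]

lemma mon_mem_Ldeg (S : Finset (Fin 6)) : mon S ∈ Ldeg S.card := by
  intro T hT
  simp only [mon, Pi.single_apply]
  rw [if_neg]
  rintro rfl; exact hT rfl

lemma mon_mem_Lpq (S : Finset (Fin 6)) {p q : ℕ}
    (hp : (S.filter fun i : Fin 6 => (i : ℕ) < 3).card = p)
    (hq : (S.filter fun i : Fin 6 => 3 ≤ (i : ℕ)).card = q) : mon S ∈ Lpq p q := by
  intro T hT
  simp only [mon, Pi.single_apply]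
  rw [if_neg]
  rintro rfl; exact hT ⟨hp, hq⟩

end Monomials

lemma IsDer.map_mon_wedge {D : Lam →ₗ[ℂ] Lam} {a b : ℕ} (hD : IsDer D a b)
    {A : Finset (Fin 6)} {k : ℕ} (hA : A.card = k) (y : Lam) :
    D (mon A ⋏ y) = D (mon A) ⋏ y + (-1 : ℂ) ^ k • (mon A ⋏ D y) :=
  hD.2 k (mon A) (hA ▸ mon_mem_Ldeg A) y

lemma IsDer.map_φ_wedge {D : Lam →ₗ[ℂ] Lam} {a b : ℕ} (hD : IsDer D a b) (j : Fin 6) (y : Lam) :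
    D (φ j ⋏ y) = D (φ j) ⋏ y - φ j ⋏ D y := by
  rw [sub_eq_add_neg, ← neg_one_smul ℂ, ← pow_one (-1 : ℂ)]
  exact hD.map_mon_wedge (Finset.card_singleton j) y

lemma Ibc_succ_succ (D Db : Lam →ₗ[ℂ] Lam) (p q : ℕ) :
    Ibc D Db (p + 1) (q + 1) = Submodule.map (D ∘ₗ Db) (Lpq p q) := by
  simp [Ibc]

/-- The paper's `A_t`. -/
def coeffA (t : ℂ) : ℂ :=
  (t - I) * (starRingEnd ℂ t + 1) + (t + 1) * (starRingEnd ℂ t + I)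

lemma coeffA_eq (t : ℂ) : coeffA t = 2 * ((normSq t : ℂ) + (t.re : ℂ) - (t.im : ℂ)) := by
  apply Complex.ext <;>
    simp [coeffA, normSq_apply] <;> ring

lemma coeffA_ne_zero {t : ℂ} (h : normSq t + t.re - t.im ≠ 0) : coeffA t ≠ 0 := by
  rw [coeffA_eq]
  exact mul_ne_zero two_ne_zero (by exact_mod_cast h)

section Deformation

variable {t : ℂ} {D Db : Lam →ₗ[ℂ] Lam}

lemma IsDelT.map_mon_03 (hD : IsDelT t D) : D (mon {0, 3}) = 0 := by
  obtain ⟨hDer, hD0, -, -, hD3, -, -⟩ := hD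
  have w023 : mon {0, 2} ⋏ φ 3 = mon {0, 2, 3} :=
    mon_wedge_mon_of_even (by decide) (by decide) (by decide)
  have w32 : φ 3 ⋏ φ 2 = -mon {2, 3} := mon_wedge_mon_of_odd (by decide) (by decide) (by decide)
  have w0_23 : φ 0 ⋏ mon {2, 3} = mon {0, 2, 3} :=
    mon_wedge_mon_of_even (by decide) (by decide) (by decide)
  rw [← φ_wedge_φ_of_lt (by decide), hDer.map_φ_wedge, hD0, hD3, φ_wedge_φ_of_lt (by decide), w32]
  simp only [smul_wedge, wedge_smul, wedge_neg, w023, w0_23]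
  module

lemma IsDelT.map_mon_14 (hD : IsDelT t D) : D (mon {1, 4}) = 0 := by
  obtain ⟨hDer, -, hD1, -, -, hD4, -⟩ := hD
  have w124 : mon {1, 2} ⋏ φ 4 = mon {1, 2, 4} :=
    mon_wedge_mon_of_even (by decide) (by decide) (by decide)
  have w42 : φ 4 ⋏ φ 2 = -mon {2, 4} := mon_wedge_mon_of_odd (by decide) (by decide) (by decide)
  have w1_24 : φ 1 ⋏ mon {2, 4} = mon {1, 2, 4} :=
    mon_wedge_mon_of_even (by decide) (by decide) (by decide)
  rw [← φ_wedge_φ_of_lt (by decide), hDer.map_φ_wedge, hD1, hD4, φ_wedge_φ_of_lt (by decide), w42]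
  simp only [smul_wedge, wedge_smul, wedge_neg, w124, w1_24]
  module

lemma IsDelBarT.map_φ2_wedge_φ5 (hDb : IsDelBarT t Db) :
    Db (φ 2 ⋏ φ 5) = (t - I) • mon {0, 3, 5} + (t + 1) • mon {1, 4, 5} := by
  obtain ⟨hDer, -, -, hb2, -, -, hb5⟩ := hDb
  have w035 : mon {0, 3} ⋏ φ 5 = mon {0, 3, 5} :=
    mon_wedge_mon_of_even (by decide) (by decide) (by decide)
  have w145 : mon {1, 4} ⋏ φ 5 = mon {1, 4, 5} :=
    mon_wedge_mon_of_even (by decide) (by decide) (by decide)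
  rw [hDer.map_φ_wedge, hb2, hb5, wedge_zero, sub_zero, φ_wedge_φ_of_lt (by decide),
    φ_wedge_φ_of_lt (by decide), add_wedge, smul_wedge, smul_wedge, w035, w145]

lemma IsDelT.map_φ5 (hD : IsDelT t D) :
    D (φ 5) = (-(starRingEnd ℂ t + I)) • mon {0, 3} + (-(starRingEnd ℂ t + 1)) • mon {1, 4} := by
  obtain ⟨-, -, -, -, -, -, hD5⟩ := hD
  have w30 : φ 3 ⋏ φ 0 = -mon {0, 3} := mon_wedge_mon_of_odd (by decide) (by decide) (by decide)
  have w41 : φ 4 ⋏ φ 1 = -mon {1, 4} := mon_wedge_mon_of_odd (by decide) (by decide) (by decide)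
  rw [hD5, w30, w41]
  module

lemma IsDelT.map_mon_035 (hD : IsDelT t D) :
    D (mon {0, 3, 5}) = (starRingEnd ℂ t + 1) • mon {0, 1, 3, 4} := by
  have w0314 : mon {0, 3} ⋏ mon {1, 4} = -mon {0, 1, 3, 4} :=
    mon_wedge_mon_of_odd (by decide) (by decide) (by decide)
  have z03 : mon {0, 3} ⋏ mon {0, 3} = 0 := mon_wedge_mon_of_not_disjoint (by decide)
  have w035 : mon {0, 3} ⋏ φ 5 = mon {0, 3, 5} :=
    mon_wedge_mon_of_even (by decide) (by decide) (by decide)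
  rw [← w035, hD.1.map_mon_wedge (k := 2) (by decide), hD.map_mon_03, hD.map_φ5]
  simp only [zero_wedge, zero_add, wedge_add, wedge_smul, z03, w0314]
  module

lemma IsDelT.map_mon_145 (hD : IsDelT t D) :
    D (mon {1, 4, 5}) = (starRingEnd ℂ t + I) • mon {0, 1, 3, 4} := by
  have w1403 : mon {1, 4} ⋏ mon {0, 3} = -mon {0, 1, 3, 4} :=
    mon_wedge_mon_of_odd (by decide) (by decide) (by decide)
  have z14 : mon {1, 4} ⋏ mon {1, 4} = 0 := mon_wedge_mon_of_not_disjoint (by decide)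
  have w145 : mon {1, 4} ⋏ φ 5 = mon {1, 4, 5} :=
    mon_wedge_mon_of_even (by decide) (by decide) (by decide)
  rw [← w145, hD.1.map_mon_wedge (k := 2) (by decide), hD.map_mon_14, hD.map_φ5]
  simp only [zero_wedge, zero_add, wedge_add, wedge_smul, z14, w1403]
  module

lemma map_φ2_wedge_φ5_eq_coeffA_smul (hD : IsDelT t D) (hDb : IsDelBarT t Db) :
    D (Db (φ 2 ⋏ φ 5)) = coeffA t • mon {0, 1, 3, 4} := by
  rw [hDb.map_φ2_wedge_φ5, map_add, map_smul, map_smul, hD.map_mon_035, hD.map_mon_145, coeffA]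
  module

end Deformation

lemma φ0_wedge_φ1_wedge_φ3_wedge_φ4 : φ 0 ⋏ φ 1 ⋏ φ 3 ⋏ φ 4 = mon {0, 1, 3, 4} := by
  have w134 : φ 1 ⋏ mon {3, 4} = mon {1, 3, 4} :=
    mon_wedge_mon_of_even (by decide) (by decide) (by decide)
  have w0134 : φ 0 ⋏ mon {1, 3, 4} = mon {0, 1, 3, 4} :=
    mon_wedge_mon_of_even (by decide) (by decide) (by decide)
  rw [φ_wedge_φ_of_lt (by decide), w134, w0134]

lemma φ0_wedge_φ3_wedge_φ1_wedge_φ4 : φ 0 ⋏ φ 3 ⋏ φ 1 ⋏ φ 4 = -mon {0, 1, 3, 4} := by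
  have w314 : φ 3 ⋏ mon {1, 4} = -mon {1, 3, 4} :=
    mon_wedge_mon_of_odd (by decide) (by decide) (by decide)
  have w0134 : φ 0 ⋏ mon {1, 3, 4} = mon {0, 1, 3, 4} :=
    mon_wedge_mon_of_even (by decide) (by decide) (by decide)
  rw [φ_wedge_φ_of_lt (by decide), w314, wedge_neg, w0134]

lemma φ03_wedge_φ14 : (φ 0 ⋏ φ 3) ⋏ (φ 1 ⋏ φ 4) = -mon {0, 1, 3, 4} := by
  rw [φ_wedge_φ_of_lt (by decide), φ_wedge_φ_of_lt (by decide)]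
  exact mon_wedge_mon_of_odd (by decide) (by decide) (by decide)

theorem stmt6_general (t : ℂ)
    (D Db : Lam →ₗ[ℂ] Lam) (hD : IsDelT t D) (hDb : IsDelBarT t Db) :
    D (Db (φ 2 ⋏ φ 5)) =
      ((t - Complex.I) * ((starRingEnd ℂ) t + 1) + (t + 1) * ((starRingEnd ℂ) t + Complex.I)) •
        (φ 0 ⋏ φ 1 ⋏ φ 3 ⋏ φ 4) ∧
    (t - Complex.I) * ((starRingEnd ℂ) t + 1) + (t + 1) * ((starRingEnd ℂ) t + Complex.I) =
      2 * ((Complex.normSq t : ℂ) + (t.re : ℂ) - (t.im : ℂ)) ∧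
    (Complex.normSq t + t.re - t.im ≠ 0 →
      φ 0 ⋏ φ 3 ⋏ φ 1 ⋏ φ 4 =
        D (Db ((-((t - Complex.I) * ((starRingEnd ℂ) t + 1) +
              (t + 1) * ((starRingEnd ℂ) t + Complex.I))⁻¹) • (φ 2 ⋏ φ 5))) ∧
      (φ 0 ⋏ φ 3) ⋏ (φ 1 ⋏ φ 4) ∈ Ibc D Db 2 2) := by
  change D (Db _) = coeffA t • _ ∧ coeffA t = _ ∧
    (_ → _ = D (Db ((-(coeffA t)⁻¹) • _)) ∧ _)
  have key := map_φ2_wedge_φ5_eq_coeffA_smul hD hDb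
  refine ⟨by rw [key, φ0_wedge_φ1_wedge_φ3_wedge_φ4], coeffA_eq t, fun h => ?_⟩
  have hexact : D (Db ((-(coeffA t)⁻¹) • (φ 2 ⋏ φ 5))) = -mon {0, 1, 3, 4} := by
    rw [map_smul, map_smul, key, smul_smul, neg_mul, inv_mul_cancel₀ (coeffA_ne_zero h),
      neg_one_smul]
  refine ⟨by rw [hexact, φ0_wedge_φ3_wedge_φ1_wedge_φ4], ?_⟩
  rw [Ibc_succ_succ D Db 1 1, φ03_wedge_φ14, ← hexact]
  refine Submodule.mem_map_of_mem (Submodule.smul_mem _ _ ?_)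
  rw [φ_wedge_φ_of_lt (by decide)]
  exact mon_mem_Lpq _ (by decide) (by decide)

/-- `∂_t∂̄_t(φ3∧φ̄3) = A_t · φ1∧φ2∧φ̄1∧φ̄2` where
`A_t = (t-i)(conj t+1) + (t+1)(conj t+i) = 2(|t|² + Re t - Im t)`; consequently, if
`|t|² + Re t - Im t ≠ 0` then `φ1∧φ̄1∧φ2∧φ̄2 = ∂_t∂̄_t(-(1/A_t) φ3∧φ̄3)` and the cup
product `[φ1∧φ̄1]·[φ2∧φ̄2]` vanishes in `H_BC^{2,2}(t)`. -/
theorem stmt6 (t : ℂ) (ht : ‖t‖ < 1)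
    (D Db : Lam →ₗ[ℂ] Lam) (hD : IsDelT t D) (hDb : IsDelBarT t Db) :
    D (Db (φ 2 ⋏ φ 5)) =
      ((t - Complex.I) * ((starRingEnd ℂ) t + 1) + (t + 1) * ((starRingEnd ℂ) t + Complex.I)) •
        (φ 0 ⋏ φ 1 ⋏ φ 3 ⋏ φ 4) ∧
    (t - Complex.I) * ((starRingEnd ℂ) t + 1) + (t + 1) * ((starRingEnd ℂ) t + Complex.I) =
      2 * ((Complex.normSq t : ℂ) + (t.re : ℂ) - (t.im : ℂ)) ∧
    (Complex.normSq t + t.re - t.im ≠ 0 →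
      φ 0 ⋏ φ 3 ⋏ φ 1 ⋏ φ 4 =
        D (Db ((-((t - Complex.I) * ((starRingEnd ℂ) t + 1) +
              (t + 1) * ((starRingEnd ℂ) t + Complex.I))⁻¹) • (φ 2 ⋏ φ 5))) ∧
      (φ 0 ⋏ φ 3) ⋏ (φ 1 ⋏ φ 4) ∈ Ibc D Db 2 2) :=
  stmt6_general t D Db hD hDb
end
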